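/- arXiv:1802.06917 — 2 statements merged into one kernel-verified Lean document; each statement's English description precedes it below -/
import Mathlib

section
/- Let S₁ ⊆ S₂ ⊆ B(H) be operator systems, let {H_α} be the net of finite-dimensional subspaces of H directed by inclusion with projections P_α, and suppose that for each α the compression φ_α : S₁ → P_α S₁ P_α, s ↦ P_α s P_α, extends to a ucp map φ̃_α : S₂ → P_α B(H) P_α with range in P_α T'' P_α for a fixed weak-operator closed operator system T'' containing S₁. Then any point-ultraweak cluster point φ̃ of the net {φ̃_α} is a ucp map S₂ → B(H) extending the inclusion S₁ ⊆ B(H), and the range of φ̃ is contained in T''. -/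
open scoped ComplexOrder

noncomputable section

variable {H : Type} [NormedAddCommGroup H] [InnerProductSpace ℂ H] [CompleteSpace H]

/-- The net of finite-dimensional subspaces of `H`, directed by inclusion. -/
abbrev FinSubspace (H : Type) [NormedAddCommGroup H] [InnerProductSpace ℂ H] : Type :=
  {V : Submodule ℂ H // FiniteDimensional ℂ V}

/-- The orthogonal projection `P_α` onto a finite-dimensional subspace, as an
operator on `H`. -/
noncomputable def projCLM (V : FinSubspace H) : H →L[ℂ] H :=
  haveI : FiniteDimensional ℂ (V.1 : Submodule ℂ H) := V.2
  (V.1.subtypeL).comp (V.1.orthogonalProjectionOnto)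

/-- The weak operator topology on `B(H)`, induced by the functionals
`T ↦ ⟪T h₁, h₂⟫`. -/
def wotTopology : TopologicalSpace (H →L[ℂ] H) :=
  TopologicalSpace.induced
    (fun T => fun p : H × H => (inner ℂ (T p.1) p.2 : ℂ)) Pi.topologicalSpace

/-- Complete positivity of a linear map defined on an operator system
`S ⊆ B(H)` with values in `B(H)`: positive operator matrices (in the sense of the
matricial order on `B(H)`) are sent to positive operator matrices. -/
def IsCpMap (S : Submodule ℂ (H →L[ℂ] H)) (φ : S →ₗ[ℂ] (H →L[ℂ] H)) : Prop :=
  ∀ (N : ℕ) (a : Fin N → Fin N → S),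
    (∀ x : Fin N → H, 0 ≤ ∑ i, ∑ j, (inner ℂ (((a i j : H →L[ℂ] H)) (x j)) (x i) : ℂ)) →
    (∀ x : Fin N → H, 0 ≤ ∑ i, ∑ j, (inner ℂ ((φ (a i j)) (x j)) (x i) : ℂ))

/-!
Pass to an ultrafilter finer than `atTop` along which `φA V` converges pointwise to `φ` in the
weak operator topology. Complete positivity passes to the limit, being a closed condition on
finitely many matrix coefficients. Since `P_V` eventually fixes any two given vectors, whenever
`φA V s = P_V t_V P_V` the operators `t_V` also converge weakly to `φ s`: taking `t_V = s` gives
the extension property (and unitality), and taking `t_V ∈ T''` puts `φ s` in the closed set `T''`.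
-/

open Filter Topology

section

variable {E : Type} [NormedAddCommGroup E] [InnerProductSpace ℂ E]

theorem eventually_mem_finSubspace (h : E) : ∀ᶠ V : FinSubspace E in atTop, h ∈ V.1 :=
  (eventually_ge_atTop ⟨ℂ ∙ h, inferInstance⟩).mono fun _ hV =>
    hV (Submodule.mem_span_singleton_self h)

theorem projCLM_apply_of_mem {V : FinSubspace E} {h : E} (hh : h ∈ V.1) : projCLM V h = h :=
  have : FiniteDimensional ℂ V.1 := V.2
  Submodule.starProjection_eq_self_iff.mpr hh

theorem inner_projCLM_comp_comp_projCLM {V : FinSubspace E} {h₁ h₂ : E} (hh₁ : h₁ ∈ V.1)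
    (hh₂ : h₂ ∈ V.1) (T : E →L[ℂ] E) :
    inner ℂ ((projCLM V).comp (T.comp (projCLM V)) h₁) h₂ = inner ℂ (T h₁) h₂ := by
  have : FiniteDimensional ℂ V.1 := V.2
  rw [ContinuousLinearMap.comp_apply, ContinuousLinearMap.comp_apply, projCLM_apply_of_mem hh₁]
  exact (Submodule.inner_starProjection_left_eq_right V.1 _ _).trans
    (congrArg (inner ℂ (T h₁)) (projCLM_apply_of_mem hh₂))

theorem eventually_inner_projCLM_comp_comp_projCLM (t : FinSubspace E → E →L[ℂ] E) (h₁ h₂ : E) :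
    ∀ᶠ V in atTop,
      inner ℂ ((projCLM V).comp ((t V).comp (projCLM V)) h₁) h₂ = inner ℂ (t V h₁) h₂ :=
  ((eventually_mem_finSubspace h₁).and (eventually_mem_finSubspace h₂)).mono fun _ hV =>
    inner_projCLM_comp_comp_projCLM hV.1 hV.2 _

theorem tendsto_wot_iff {α : Type*} {l : Filter α} {u : α → E →L[ℂ] E} {T : E →L[ℂ] E} :
    Tendsto u l (@nhds _ wotTopology T) ↔
      ∀ h₁ h₂ : E, Tendsto (fun a => inner ℂ (u a h₁) h₂) l (𝓝 (inner ℂ (T h₁) h₂)) := by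
  rw [wotTopology, nhds_induced, tendsto_comap_iff, tendsto_pi_nhds, Prod.forall]
  rfl

theorem eq_of_tendsto_wot {α : Type*} {l : Filter α} [l.NeBot] {u : α → E →L[ℂ] E}
    {T T' : E →L[ℂ] E} (hT : Tendsto u l (@nhds _ wotTopology T))
    (hT' : Tendsto u l (@nhds _ wotTopology T')) : T = T' :=
  ContinuousLinearMap.ext fun h₁ => ext_inner_right ℂ fun h₂ =>
    tendsto_nhds_unique (tendsto_wot_iff.1 hT h₁ h₂) (tendsto_wot_iff.1 hT' h₁ h₂)

theorem tendsto_wot_of_tendsto_compress {l : Filter (FinSubspace E)} (hl : l ≤ atTop)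
    {t : FinSubspace E → E →L[ℂ] E} {y : E →L[ℂ] E}
    (h : Tendsto (fun V => (projCLM V).comp ((t V).comp (projCLM V))) l
      (@nhds _ wotTopology y)) :
    Tendsto t l (@nhds _ wotTopology y) :=
  tendsto_wot_iff.2 fun h₁ h₂ => (tendsto_wot_iff.1 h h₁ h₂).congr'
    (hl (eventually_inner_projCLM_comp_comp_projCLM t h₁ h₂))

theorem isCpMap_of_tendsto {S : Submodule ℂ (E →L[ℂ] E)} {α : Type*} {l : Filter α} [l.NeBot]
    {ψ : α → S →ₗ[ℂ] (E →L[ℂ] E)} {φ : S →ₗ[ℂ] (E →L[ℂ] E)} (hψ : ∀ a, IsCpMap S (ψ a))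
    (hlim : ∀ s, Tendsto (fun a => ψ a s) l (@nhds _ wotTopology (φ s))) : IsCpMap S φ :=
  fun N m hm x => ge_of_tendsto'
    (tendsto_finsetSum _ fun i _ => tendsto_finsetSum _ fun j _ =>
      tendsto_wot_iff.1 (hlim (m i j)) (x j) (x i))
    fun a => hψ a N m hm x

end

theorem stmt5_general
    (S₁ S₂ : Submodule ℂ (H →L[ℂ] H)) (hsub : S₁ ≤ S₂)
    (h1 : (1 : H →L[ℂ] H) ∈ S₁)
    (T'' : Set (H →L[ℂ] H))
    (hTclosed : @IsClosed _ wotTopology T'')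
    (φA : FinSubspace H → (S₂ →ₗ[ℂ] (H →L[ℂ] H)))
    (hcp : ∀ V, IsCpMap S₂ (φA V))
    (hextend : ∀ (V) (s : S₂), (s : H →L[ℂ] H) ∈ S₁ →
      φA V s = (projCLM V).comp (((s : H →L[ℂ] H)).comp (projCLM V)))
    (hrange : ∀ V s, ∃ t ∈ T'', φA V s = (projCLM V).comp (t.comp (projCLM V)))
    (φ : S₂ →ₗ[ℂ] (H →L[ℂ] H))
    (hclust : @MapClusterPt (S₂ → (H →L[ℂ] H))
      (@Pi.topologicalSpace S₂ (fun _ => H →L[ℂ] H) (fun _ => wotTopology))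
      (FinSubspace H) (fun s => φ s) Filter.atTop (fun V s => φA V s)) :
    IsCpMap S₂ φ ∧ φ ⟨1, hsub h1⟩ = 1 ∧
      (∀ s : S₂, (s : H →L[ℂ] H) ∈ S₁ → φ s = (s : H →L[ℂ] H)) ∧
      ∀ s, φ s ∈ T'' := by
  let _ : TopologicalSpace (H →L[ℂ] H) := wotTopology
  obtain ⟨U, hU, hφ⟩ := mapClusterPt_iff_ultrafilter.1 hclust
  have hlim : ∀ s, Tendsto (fun V => φA V s) U (@nhds _ wotTopology (φ s)) :=
    tendsto_pi_nhds.1 hφ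
  have hext : ∀ s : S₂, (s : H →L[ℂ] H) ∈ S₁ → φ s = s := fun s hs =>
    eq_of_tendsto_wot (tendsto_wot_of_tendsto_compress (t := fun _ => s) hU
      ((hlim s).congr fun V => hextend V s hs)) tendsto_const_nhds
  refine ⟨isCpMap_of_tendsto hcp hlim, hext _ h1, hext, fun s => ?_⟩
  choose t htT ht using fun V => hrange V s
  exact hTclosed.mem_of_tendsto (tendsto_wot_of_tendsto_compress hU ((hlim s).congr ht))
    (Eventually.of_forall htT)

/-- Let `S₁ ⊆ S₂ ⊆ B(H)` be operator systems, and for each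
finite-dimensional subspace `V = H_α` of `H` let `φ_α : S₂ → P_α B(H) P_α` be a ucp map
extending the compression `s ↦ P_α s P_α` of `S₁`, with range inside `P_α T'' P_α`, where
`T''` is a fixed WOT-closed operator system containing `S₁`. Then any point-WOT
(point-ultraweak) cluster point `φ` of the net `{φ_α}` is a ucp map `S₂ → B(H)` which
extends the inclusion `S₁ ⊆ B(H)` and whose range is contained in `T''`. -/
theorem stmt5
    (S₁ S₂ : Submodule ℂ (H →L[ℂ] H)) (hsub : S₁ ≤ S₂)
    (hS₁sa : ∀ s ∈ S₁, ContinuousLinearMap.adjoint s ∈ S₁)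
    (h1 : (1 : H →L[ℂ] H) ∈ S₁)
    (T'' : Set (H →L[ℂ] H)) (hT₁ : ∀ s ∈ S₁, s ∈ T'')
    (hTclosed : @IsClosed _ wotTopology T'')
    (φA : FinSubspace H → (S₂ →ₗ[ℂ] (H →L[ℂ] H)))
    (hcp : ∀ V, IsCpMap S₂ (φA V))
    (hcorner : ∀ V s, φA V s = (projCLM V).comp (((φA V) s).comp (projCLM V)))
    (hextend : ∀ (V) (s : S₂), (s : H →L[ℂ] H) ∈ S₁ →
      φA V s = (projCLM V).comp (((s : H →L[ℂ] H)).comp (projCLM V)))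
    (hunital : ∀ V, φA V ⟨1, hsub h1⟩ = projCLM V)
    (hrange : ∀ V s, ∃ t ∈ T'', φA V s = (projCLM V).comp (t.comp (projCLM V)))
    (φ : S₂ →ₗ[ℂ] (H →L[ℂ] H))
    (hclust : @MapClusterPt (S₂ → (H →L[ℂ] H))
      (@Pi.topologicalSpace S₂ (fun _ => H →L[ℂ] H) (fun _ => wotTopology))
      (FinSubspace H) (fun s => φ s) Filter.atTop (fun V s => φA V s)) :
    IsCpMap S₂ φ ∧ φ ⟨1, hsub h1⟩ = 1 ∧
      (∀ s : S₂, (s : H →L[ℂ] H) ∈ S₁ → φ s = (s : H →L[ℂ] H)) ∧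
      ∀ s, φ s ∈ T'' :=
  stmt5_general S₁ S₂ hsub h1 T'' hTclosed φA hcp hextend hrange φ hclust
end
end

section
/- If J is a null-subspace of M_n, then M_k ⊗ J is a null-subspace of M_k ⊗ M_n, i.e., if X ∈ M_k ⊗ J is positive semidefinite then X = 0. -/
open scoped ComplexOrder

noncomputable section

/-- A null-subspace of `Mₙ`: a self-adjoint subspace containing no nonzero positive
(semidefinite) elements. -/
def IsNullSub {n : ℕ} (J : Submodule ℂ (Matrix (Fin n) (Fin n) ℂ)) : Prop :=
  (∀ A ∈ J, A.conjTranspose ∈ J) ∧ ∀ A ∈ J, A.PosSemidef → A = 0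

/-- The type of null-subspaces of `Mₙ`. -/
def NullSub (n : ℕ) : Type :=
  {J : Submodule ℂ (Matrix (Fin n) (Fin n) ℂ) // IsNullSub J}

/-- A concrete matrix system: a unital self-adjoint subspace of `Mₙ`. -/
def MatSysSub (n : ℕ) : Type :=
  {R : Submodule ℂ (Matrix (Fin n) (Fin n) ℂ) //
    (1 : Matrix (Fin n) (Fin n) ℂ) ∈ R ∧ ∀ A ∈ R, A.conjTranspose ∈ R}

/-- The span of the elementary tensors `A ⊗ B` with `B ∈ J`, inside
`M_k ⊗ M_n` realized as matrices indexed by `Fin k × Fin n`. -/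
def kronSpan (k n : ℕ) (J : Submodule ℂ (Matrix (Fin n) (Fin n) ℂ)) :
    Submodule ℂ (Matrix (Fin k × Fin n) (Fin k × Fin n) ℂ) :=
  Submodule.span ℂ {Y | ∃ (A : Matrix (Fin k) (Fin k) ℂ) (B : Matrix (Fin n) (Fin n) ℂ),
    B ∈ J ∧ Y = Matrix.kroneckerMap (· * ·) A B}

/-- `M_k ⊗ J ⊆ M_k ⊗ M_n ≅ M_{kn}`, realized over the index `Fin (k * n)`. -/
noncomputable def kronAmp (k n : ℕ) (J : Submodule ℂ (Matrix (Fin n) (Fin n) ℂ)) :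
    Submodule ℂ (Matrix (Fin (k * n)) (Fin (k * n)) ℂ) :=
  Submodule.map
    (Matrix.reindexLinearEquiv ℂ ℂ finProdFinEquiv finProdFinEquiv).toLinearMap
    (kronSpan k n J)

/-- An abstract framework for the category of operator systems, together with the
standard constructions used in the theory of operator system tensor products:
ucp/cp maps, complete order embeddings, duals and biduals, the minimal, maximal,
commuting and right-injective tensor products, matrix algebras and their operator
system quotients by null-subspaces, matrix systems, injective envelopes, universal
C*-algebras, commutants and bicommutants of ranges of maps into `B(H)`-objects,
the cb-norm distance, and the Namioka–Phelps test system `W₆ ⊆ ℓ∞₆`. -/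
structure OSCat where
  /-- operator systems -/
  OS : Type
  /-- linear unital self-adjoint maps between operator systems -/
  Hom : OS → OS → Type
  idm : ∀ S, Hom S S
  comp : ∀ {A B C}, Hom A B → Hom B C → Hom A C
  /-- completely positive -/
  Cp : ∀ {A B}, Hom A B → Prop
  /-- unital completely positive -/
  Ucp : ∀ {A B}, Hom A B → Prop
  /-- unital order embedding -/
  OEmb : ∀ {A B}, Hom A B → Prop
  /-- unital complete order embedding -/
  COEmb : ∀ {A B}, Hom A B → Prop
  /-- (not necessarily unital) complete order embedding -/
  CpOEmb : ∀ {A B}, Hom A B → Prop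
  /-- unital complete order isomorphism -/
  COIso : ∀ {A B}, Hom A B → Prop
  /-- complete quotient map -/
  QuotMap : ∀ {A B}, Hom A B → Prop
  /-- surjective -/
  Surj : ∀ {A B}, Hom A B → Prop
  /-- finite dimensional -/
  FinDim : OS → Prop
  /-- the bidual operator system `S**` -/
  bidual : OS → OS
  /-- the canonical complete order inclusion `S ↪ S**` -/
  ι : ∀ S, Hom S (bidual S)
  /-- the second adjoint of a map -/
  bidualMap : ∀ {A B}, Hom A B → Hom (bidual A) (bidual B)
  /-- the dual operator system (used for finite dimensional systems) -/
  dual : OS → OS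
  /-- the adjoint of a map -/
  dualMap : ∀ {A B}, Hom A B → Hom (dual B) (dual A)
  /-- the operator system `ℂ`; `Hom S scalarOS` are the linear functionals -/
  scalarOS : OS
  /-- the order on functionals: `fle ψ φ` means `φ - ψ` is positive -/
  fle : ∀ {S}, Hom S scalarOS → Hom S scalarOS → Prop
  /-- the Effros system `[φ]` of a positive functional `φ`, an operator
  subsystem of `S*` with unit `φ` -/
  Eff : ∀ {S}, Hom S scalarOS → OS
  /-- `EffCp φ φ' E` : the assignment `ψ ↦ E ψ` defines a completely positive
  map from the Effros system `[φ]` to the Effros system `[φ']` -/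
  EffCp : ∀ {S₁ S₂} (φ : Hom S₁ scalarOS) (φ' : Hom S₂ scalarOS),
    (Hom S₁ scalarOS → Hom S₂ scalarOS) → Prop
  /-- the minimal operator system tensor product -/
  tmin : OS → OS → OS
  /-- the maximal operator system tensor product -/
  tmax : OS → OS → OS
  /-- the commuting operator system tensor product -/
  tc : OS → OS → OS
  /-- the right injective operator system tensor product `S ⊗_er T ⊆ S ⊗_max I(T)` -/
  ter : OS → OS → OS
  /-- functoriality of `⊗_max` -/
  tmaxMap : ∀ {A B C D}, Hom A C → Hom B D → Hom (tmax A B) (tmax C D)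
  /-- the left canonical inclusion `s ↦ s ⊗ 1` -/
  tmaxInl : ∀ S T, Hom S (tmax S T)
  /-- the right canonical inclusion `t ↦ 1 ⊗ t` -/
  tmaxInr : ∀ S T, Hom T (tmax S T)
  /-- the canonical ucp map `S ⊗_max T → S ⊗_min T` induced by the identity -/
  maxToMin : ∀ S T, Hom (tmax S T) (tmin S T)
  /-- the canonical ucp map `S ⊗_max T → S ⊗_c T` induced by the identity -/
  maxToC : ∀ S T, Hom (tmax S T) (tc S T)
  /-- the canonical ucp map `S ⊗_max T → S ⊗_er T` induced by the identity -/
  maxToEr : ∀ S T, Hom (tmax S T) (ter S T)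
  /-- the matrix algebra `Mₙ` as an operator system -/
  Mat : ℕ → OS
  /-- the operator system quotient `Mₙ/J` by a null-subspace `J` -/
  MatQuot : ∀ {n}, NullSub n → OS
  /-- the matricial amplification `M_k(S)` -/
  matAmp : ℕ → OS → OS
  /-- a concrete matrix system `R ⊆ Mₙ` as an operator system object -/
  mOS : ∀ {n}, MatSysSub n → OS
  /-- the inclusion `R ⊆ Mₙ` -/
  mIncl : ∀ {n} (R : MatSysSub n), Hom (mOS R) (Mat n)
  /-- the injective envelope -/
  IE : OS → OS
  /-- the canonical inclusion `S ⊆ I(S)` -/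
  ieIncl : ∀ S, Hom S (IE S)
  /-- the universal C*-algebra of an operator system -/
  Cu : OS → OS
  /-- the canonical inclusion `S ⊆ C*ᵤ(S)` -/
  cuIncl : ∀ S, Hom S (Cu S)
  /-- functoriality of `C*ᵤ` -/
  CuMap : ∀ {A B}, Hom A B → Hom (Cu A) (Cu B)
  /-- the object carries the structure of a unital C*-algebra (is unitally
  completely order isomorphic to one) -/
  CstarAlg : OS → Prop
  /-- injectivity in the category of operator systems -/
  Injective : OS → Prop
  /-- the object is (unitally completely order isomorphic to) some `B(H)` -/
  IsBHObj : OS → Prop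
  /-- the commutant `i(S)'` of the range of `i : S → B(H)` -/
  Commutant : ∀ {S B}, Hom S B → OS
  /-- the inclusion `i(S)' ⊆ B(H)` -/
  commIncl : ∀ {S B} (i : Hom S B), Hom (Commutant i) B
  /-- the double commutant `i(S)''` of the range of `i : S → B(H)` -/
  RangeBicomm : ∀ {S B}, Hom S B → OS
  /-- the inclusion `i(S)'' ⊆ B(H)` -/
  bicommIncl : ∀ {S B} (i : Hom S B), Hom (RangeBicomm i) B
  /-- the cb-norm distance `‖f - g‖_cb` -/
  cbDist : ∀ {A B}, Hom A B → Hom A B → ℝ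
  /-- the abelian C*-algebra `ℓ∞₆` -/
  ell6 : OS
  /-- the Namioka–Phelps test system `W₆ = {(aᵢ) ∈ ℓ∞₆ : a₁+a₂+a₃ = a₄+a₅+a₆}` -/
  W6 : OS
  /-- the inclusion `W₆ ⊆ ℓ∞₆` -/
  w6Incl : Hom W6 ell6

namespace OSCat

variable (𝒞 : OSCat)

/-- `S₁` is weakly relatively injective (w.r.i.) in `S₂` along the inclusion `j` :
the canonical inclusion `S₁ ↪ S₁**` extends to a ucp map on `S₂`. -/
def WRI {S₁ S₂ : 𝒞.OS} (j : 𝒞.Hom S₁ S₂) : Prop :=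
  ∃ i' : 𝒞.Hom S₂ (𝒞.bidual S₁), 𝒞.Ucp i' ∧ 𝒞.comp j i' = 𝒞.ι S₁

/-- The weak expectation property: `S` is w.r.i. in its injective envelope `I(S)`. -/
def WEP (S : 𝒞.OS) : Prop := 𝒞.WRI (𝒞.ieIncl S)

/-- Nuclearity: `S ⊗_min T = S ⊗_max T` for every operator system `T`. -/
def Nuclear (S : 𝒞.OS) : Prop := ∀ T, 𝒞.COIso (𝒞.maxToMin S T)

/-- `S₁` has relative double commutant injectivity (r.d.c.i.) in `S₂`: every
unital complete order embedding `i : S₁ ↪ B(H)` extends to a ucp map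
`ĩ : S₂ → B(H)` with `ĩ(S₂) ⊆ i(S₁)''`. -/
def RDCI {S₁ S₂ : 𝒞.OS} (j : 𝒞.Hom S₁ S₂) : Prop :=
  ∀ B : 𝒞.OS, 𝒞.IsBHObj B → ∀ i : 𝒞.Hom S₁ B, 𝒞.COEmb i →
    ∃ i' : 𝒞.Hom S₂ B, 𝒞.Ucp i' ∧ 𝒞.comp j i' = i ∧
      ∃ i'' : 𝒞.Hom S₂ (𝒞.RangeBicomm i), 𝒞.comp i'' (𝒞.bicommIncl i) = i'

end OSCat

lemma psd_diag_zero {m : Type*} [Fintype m] [DecidableEq m]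
    {X : Matrix m m ℂ} (hX : X.PosSemidef) (hd : ∀ i, X i i = 0) : X = 0 := by
  exact hX.trace_eq_zero_iff.mp (by simp [Matrix.trace, hd])

def blockMap (k n : ℕ) (i : Fin k) :
    Matrix (Fin k × Fin n) (Fin k × Fin n) ℂ →ₗ[ℂ] Matrix (Fin n) (Fin n) ℂ where
  toFun Y := Y.submatrix (fun a => (i, a)) (fun a => (i, a))
  map_add' _ _ := rfl
  map_smul' _ _ := rfl

/-- If `J ⊆ Mₙ` is a null-subspace (self-adjoint, containing no nonzero
positive semidefinite matrix), then `M_k ⊗ J` is a null-subspace of `M_k ⊗ Mₙ`: any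
positive semidefinite element of `M_k ⊗ J` is zero. -/
theorem stmt9 (k n : ℕ) (J : Submodule ℂ (Matrix (Fin n) (Fin n) ℂ))
    (hsa : ∀ A ∈ J, A.conjTranspose ∈ J)
    (hnull : ∀ A ∈ J, A.PosSemidef → A = 0)
    (X : Matrix (Fin k × Fin n) (Fin k × Fin n) ℂ)
    (hX : X ∈ kronSpan k n J) (hpos : X.PosSemidef) : X = 0 := by
  have hblock : ∀ i : Fin k, blockMap k n i X ∈ J := by
    intro i
    unfold kronSpan at hX
    refine Submodule.span_induction (p := fun Y _ => blockMap k n i Y ∈ J) ?_ ?_ ?_ ?_ hX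
    · rintro Y ⟨A, B, hB, rfl⟩
      have : blockMap k n i (Matrix.kroneckerMap (· * ·) A B) = A i i • B := by
        ext a b
        simp [blockMap, Matrix.kroneckerMap, Matrix.submatrix]
      rw [this]
      exact J.smul_mem _ hB
    · simpa using J.zero_mem
    · intro x y _ _ hx hy
      rw [map_add]; exact J.add_mem hx hy
    · intro c x _ hx
      rw [map_smul]; exact J.smul_mem c hx
  have hdiag : ∀ p : Fin k × Fin n, X p p = 0 := by
    rintro ⟨i, a⟩
    have hpsd : (blockMap k n i X).PosSemidef := hpos.submatrix _
    have := hnull _ (hblock i) hpsd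
    have := congrFun (congrFun this a) a
    simpa [blockMap, Matrix.submatrix] using this
  exact psd_diag_zero hpos hdiag
end
end
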